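/- Assume G is finite and the action of G on Z is free, and let z, w ∈ Z lie in different G-orbits (i.e. w ≠ k•z for every k ∈ G). Then the J-orbit of (z,w) is partitioned into exactly |G| distinct H-orbits: every point of the J-orbit of (z,w) lies in the H-orbit of (z, g•w) for a unique g ∈ G, so the set of H-orbits of points of the J-orbit of (z,w) has cardinality |G|. -/
import Mathlib

/-- The swap permutation `σ(z,w) = (w,z)` of `Z × Z`. -/
def sw (Z : Type*) : Equiv.Perm (Z × Z) := Equiv.prodComm Z Z

/-- The permutation `s_g(z,w) = (z, g • w)` of `Z × Z`. -/
def sMap {Z G : Type*} [Group G] [MulAction G Z] (g : G) : Equiv.Perm (Z × Z) :=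
  Equiv.prodCongr (Equiv.refl Z) (MulAction.toPerm g)

/-- The permutation `δ_g(z,w) = (g • z, g • w)` of `Z × Z`. -/
def dMap {Z G : Type*} [Group G] [MulAction G Z] (g : G) : Equiv.Perm (Z × Z) :=
  Equiv.prodCongr (MulAction.toPerm g) (MulAction.toPerm g)

/-- The subgroup `J` generated by `σ` and all `s_g`, `g ∈ G`. -/
def Jgrp (Z G : Type*) [Group G] [MulAction G Z] : Subgroup (Equiv.Perm (Z × Z)) :=
  Subgroup.closure ({sw Z} ∪ Set.range (sMap : G → Equiv.Perm (Z × Z)))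

/-- The subgroup `H` generated by `σ` and all `δ_g`, `g ∈ G`. -/
def Hgrp (Z G : Type*) [Group G] [MulAction G Z] : Subgroup (Equiv.Perm (Z × Z)) :=
  Subgroup.closure ({sw Z} ∪ Set.range (dMap : G → Equiv.Perm (Z × Z)))

lemma sw_mem_J (Z G : Type*) [Group G] [MulAction G Z] : sw Z ∈ Jgrp Z G :=
  Subgroup.subset_closure (Set.mem_union_left _ rfl)

lemma sMap_mem_J {Z G : Type*} [Group G] [MulAction G Z] (g : G) :
    sMap (Z := Z) g ∈ Jgrp Z G :=
  Subgroup.subset_closure (Set.mem_union_right _ ⟨g, rfl⟩)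

section Aux

variable {Z G : Type*} [Group G] [MulAction G Z]

lemma sw_mem_H (Z G : Type*) [Group G] [MulAction G Z] : sw Z ∈ Hgrp Z G :=
  Subgroup.subset_closure (Set.mem_union_left _ rfl)

lemma dMap_mem_H (g : G) : dMap (Z := Z) g ∈ Hgrp Z G :=
  Subgroup.subset_closure (Set.mem_union_right _ ⟨g, rfl⟩)

lemma sw_apply (p : Z × Z) : sw Z p = (p.2, p.1) := rfl
lemma sMap_apply (g : G) (p : Z × Z) : sMap (Z := Z) g p = (p.1, g • p.2) := rfl
lemma dMap_apply (g : G) (p : Z × Z) : dMap (Z := Z) g p = (g • p.1, g • p.2) := rfl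

/-- invariant set for the J-orbit -/
def JS (G : Type*) [Group G] [MulAction G Z] (z w : Z) : Set (Z × Z) :=
  {p | (∃ a b : G, p = (a • z, b • w)) ∨ (∃ a b : G, p = (b • w, a • z))}

lemma J_invariant (z w : Z) :
    ∀ k ∈ Jgrp Z G, ∀ p : Z × Z, p ∈ JS G z w ↔ k p ∈ JS G z w := by
  intro k hk
  induction hk using Subgroup.closure_induction with
  | mem x hx =>
    rcases hx with hx | ⟨g, rfl⟩
    · simp only [Set.mem_singleton_iff] at hx
      subst hx
      intro p
      constructor
      · rintro (⟨a, b, rfl⟩ | ⟨a, b, rfl⟩)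
        · exact Or.inr ⟨a, b, rfl⟩
        · exact Or.inl ⟨a, b, rfl⟩
      · rw [sw_apply]
        rintro (⟨a, b, hp⟩ | ⟨a, b, hp⟩) <;> simp only [Prod.mk.injEq] at hp
        · exact Or.inr ⟨a, b, Prod.ext_iff.mpr ⟨hp.2, hp.1⟩⟩
        · exact Or.inl ⟨a, b, Prod.ext_iff.mpr ⟨hp.2, hp.1⟩⟩
    · intro p
      constructor
      · rintro (⟨a, b, rfl⟩ | ⟨a, b, rfl⟩)
        · have h2 : g • (b • w) = (g * b) • w := (mul_smul g b w).symm
          exact Or.inl ⟨a, g * b, Prod.ext_iff.mpr ⟨rfl, h2⟩⟩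
        · have h2 : g • (a • z) = (g * a) • z := (mul_smul g a z).symm
          exact Or.inr ⟨g * a, b, Prod.ext_iff.mpr ⟨rfl, h2⟩⟩
      · rw [sMap_apply]
        rintro (⟨a, b, hp⟩ | ⟨a, b, hp⟩) <;> simp only [Prod.mk.injEq] at hp
        · have h2 : p.2 = (g⁻¹ * b) • w := by
            rw [mul_smul, ← hp.2, inv_smul_smul]
          exact Or.inl ⟨a, g⁻¹ * b, Prod.ext_iff.mpr ⟨hp.1, h2⟩⟩
        · have h2 : p.2 = (g⁻¹ * a) • z := by
            rw [mul_smul, ← hp.2, inv_smul_smul]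
          exact Or.inr ⟨g⁻¹ * a, b, Prod.ext_iff.mpr ⟨hp.1, h2⟩⟩
  | one => simp
  | mul x y hx hy ihx ihy =>
    intro p
    rw [ihy p, ihx (y p)]
    rfl
  | inv x hx ihx =>
    intro p
    conv_lhs => rw [show p = x (x⁻¹ p) by simp, ← ihx (x⁻¹ p)]

/-- invariant set for the H-orbit of (z, g•w) -/
def TS (z w : Z) (g : G) : Set (Z × Z) :=
  {p | (∃ a : G, p = (a • z, (a * g) • w)) ∨ (∃ a : G, p = ((a * g) • w, a • z))}

lemma H_invariant (z w : Z) (g : G) :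
    ∀ k ∈ Hgrp Z G, ∀ p : Z × Z, p ∈ TS z w g ↔ k p ∈ TS z w g := by
  intro k hk
  induction hk using Subgroup.closure_induction with
  | mem x hx =>
    rcases hx with hx | ⟨c, rfl⟩
    · simp only [Set.mem_singleton_iff] at hx
      subst hx
      intro p
      constructor
      · rintro (⟨a, rfl⟩ | ⟨a, rfl⟩)
        · exact Or.inr ⟨a, rfl⟩
        · exact Or.inl ⟨a, rfl⟩
      · rw [sw_apply]
        rintro (⟨a, hp⟩ | ⟨a, hp⟩) <;> simp only [Prod.mk.injEq] at hp
        · exact Or.inr ⟨a, Prod.ext_iff.mpr ⟨hp.2, hp.1⟩⟩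
        · exact Or.inl ⟨a, Prod.ext_iff.mpr ⟨hp.2, hp.1⟩⟩
    · intro p
      constructor
      · rintro (⟨a, rfl⟩ | ⟨a, rfl⟩)
        · have h1 : c • (a • z) = (c * a) • z := (mul_smul c a z).symm
          have h2 : c • ((a * g) • w) = ((c * a) * g) • w := by
            simp only [mul_smul]
          exact Or.inl ⟨c * a, Prod.ext_iff.mpr ⟨h1, h2⟩⟩
        · have h1 : c • ((a * g) • w) = ((c * a) * g) • w := by
            simp only [mul_smul]
          have h2 : c • (a • z) = (c * a) • z := (mul_smul c a z).symm
          exact Or.inr ⟨c * a, Prod.ext_iff.mpr ⟨h1, h2⟩⟩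
      · rw [dMap_apply]
        rintro (⟨a, hp⟩ | ⟨a, hp⟩) <;> simp only [Prod.mk.injEq] at hp
        · have h1 : p.1 = (c⁻¹ * a) • z := by
            rw [mul_smul, ← hp.1, inv_smul_smul]
          have h2 : p.2 = ((c⁻¹ * a) * g) • w := by
            rw [mul_assoc, mul_smul, ← hp.2, inv_smul_smul]
          exact Or.inl ⟨c⁻¹ * a, Prod.ext_iff.mpr ⟨h1, h2⟩⟩
        · have h1 : p.1 = ((c⁻¹ * a) * g) • w := by
            rw [mul_assoc, mul_smul, ← hp.1, inv_smul_smul]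
          have h2 : p.2 = (c⁻¹ * a) • z := by
            rw [mul_smul, ← hp.2, inv_smul_smul]
          exact Or.inr ⟨c⁻¹ * a, Prod.ext_iff.mpr ⟨h1, h2⟩⟩
  | one => simp
  | mul x y hx hy ihx ihy =>
    intro p
    rw [ihy p, ihx (y p)]
    rfl
  | inv x hx ihx =>
    intro p
    conv_lhs => rw [show p = x (x⁻¹ p) by simp, ← ihx (x⁻¹ p)]

end Aux

theorem stmt18 {Z G : Type*} [Group G] [MulAction G Z] [Finite G]
    (hfree : ∀ (g : G) (z : Z), g • z = z → g = 1)
    (z w : Z) (hzw : ∀ k : G, w ≠ k • z) :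
    (∀ p ∈ {x : Z × Z | ∃ k ∈ Jgrp Z G, k (z, w) = x},
      ∃! g : G, p ∈ {x : Z × Z | ∃ k ∈ Hgrp Z G, k (z, g • w) = x}) ∧
    Nat.card
      ((fun p : Z × Z => {x : Z × Z | ∃ k ∈ Hgrp Z G, k p = x}) ''
        {x : Z × Z | ∃ k ∈ Jgrp Z G, k (z, w) = x}) = Nat.card G := by
  have hcan : ∀ (a a' : G) (u : Z), a • u = a' • u → a = a' := by
    intro a a' u h
    have h1 : (a'⁻¹ * a) • u = u := by rw [mul_smul, h, inv_smul_smul]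
    exact (inv_mul_eq_one.mp (hfree _ _ h1)).symm
  have hdisj : ∀ (a b : G), a • z ≠ b • w := by
    intro a b h
    have : w = (b⁻¹ * a) • z := by rw [mul_smul, h, inv_smul_smul]
    exact hzw _ this
  have hJ : ∀ p ∈ {x : Z × Z | ∃ k ∈ Jgrp Z G, k (z, w) = x}, p ∈ JS G z w := by
    rintro p ⟨k, hk, rfl⟩
    exact (J_invariant z w k hk (z, w)).mp (Or.inl ⟨1, 1, by simp⟩)
  have hmemH : ∀ (a b : G), (a • z, b • w) ∈
      {x : Z × Z | ∃ k ∈ Hgrp Z G, k (z, (a⁻¹ * b) • w) = x} := by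
    intro a b
    refine ⟨dMap a, dMap_mem_H a, ?_⟩
    rw [dMap_apply]
    simp [smul_smul]
  have hmemH' : ∀ (a b : G), (b • w, a • z) ∈
      {x : Z × Z | ∃ k ∈ Hgrp Z G, k (z, (a⁻¹ * b) • w) = x} := by
    intro a b
    refine ⟨sw Z * dMap a, mul_mem (sw_mem_H Z G) (dMap_mem_H a), ?_⟩
    show sw Z (dMap a (z, (a⁻¹ * b) • w)) = _
    rw [dMap_apply, sw_apply]
    simp [smul_smul]
  have hHsub : ∀ (g : G) (p : Z × Z),
      p ∈ {x : Z × Z | ∃ k ∈ Hgrp Z G, k (z, g • w) = x} → p ∈ TS z w g := by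
    rintro g p ⟨k, hk, rfl⟩
    exact (H_invariant z w g k hk (z, g • w)).mp (Or.inl ⟨1, by simp⟩)
  have huniq : ∀ (g g' : G) (p : Z × Z), p ∈ TS z w g → p ∈ TS z w g' → g = g' := by
    rintro g g' p (⟨a, rfl⟩ | ⟨a, rfl⟩) (⟨a', hp⟩ | ⟨a', hp⟩) <;>
      simp only [Prod.mk.injEq] at hp
    · obtain rfl : a = a' := hcan _ _ _ hp.1
      exact mul_left_cancel (hcan _ _ _ hp.2)
    · exact absurd hp.1 (hdisj a (a' * g'))
    · exact absurd hp.2 (hdisj a (a' * g'))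
    · obtain rfl : a = a' := hcan _ _ _ hp.2
      exact mul_left_cancel (hcan _ _ _ hp.1)
  have part1 : ∀ p ∈ {x : Z × Z | ∃ k ∈ Jgrp Z G, k (z, w) = x},
      ∃! g : G, p ∈ {x : Z × Z | ∃ k ∈ Hgrp Z G, k (z, g • w) = x} := by
    intro p hp
    rcases hJ p hp with ⟨a, b, rfl⟩ | ⟨a, b, rfl⟩
    · refine ⟨a⁻¹ * b, hmemH a b, fun g' hg' => ?_⟩
      refine huniq g' (a⁻¹ * b) _ (hHsub g' _ hg') (Or.inl ⟨a, ?_⟩)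
      have h2 : b • w = (a * (a⁻¹ * b)) • w := by rw [mul_inv_cancel_left]
      exact Prod.ext_iff.mpr ⟨rfl, h2⟩
    · refine ⟨a⁻¹ * b, hmemH' a b, fun g' hg' => ?_⟩
      refine huniq g' (a⁻¹ * b) _ (hHsub g' _ hg') (Or.inr ⟨a, ?_⟩)
      have h1 : b • w = (a * (a⁻¹ * b)) • w := by rw [mul_inv_cancel_left]
      exact Prod.ext_iff.mpr ⟨h1, rfl⟩
  refine ⟨part1, ?_⟩
  set f : G → Set (Z × Z) := fun g => {x : Z × Z | ∃ k ∈ Hgrp Z G, k (z, g • w) = x} with hf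
  have horbEq : ∀ (p q : Z × Z), (∃ k ∈ Hgrp Z G, k q = p) →
      {x : Z × Z | ∃ k ∈ Hgrp Z G, k p = x} = {x : Z × Z | ∃ k ∈ Hgrp Z G, k q = x} := by
    rintro p q ⟨k0, hk0, rfl⟩
    ext x
    constructor
    · rintro ⟨k, hk, rfl⟩
      exact ⟨k * k0, mul_mem hk hk0, rfl⟩
    · rintro ⟨k, hk, rfl⟩
      exact ⟨k * k0⁻¹, mul_mem hk (inv_mem hk0), by simp⟩
  have himg : ((fun p : Z × Z => {x : Z × Z | ∃ k ∈ Hgrp Z G, k p = x}) ''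
      {x : Z × Z | ∃ k ∈ Jgrp Z G, k (z, w) = x}) = Set.range f := by
    ext S
    constructor
    · rintro ⟨p, hp, rfl⟩
      rcases hJ p hp with ⟨a, b, rfl⟩ | ⟨a, b, rfl⟩
      · exact ⟨a⁻¹ * b, (horbEq _ _ (hmemH a b)).symm⟩
      · exact ⟨a⁻¹ * b, (horbEq _ _ (hmemH' a b)).symm⟩
    · rintro ⟨g, rfl⟩
      exact ⟨(z, g • w), ⟨sMap g, sMap_mem_J g, rfl⟩, rfl⟩
  rw [himg]
  refine Nat.card_range_of_injective (f := f) fun g g' hgg' => ?_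
  have h1 : (z, g • w) ∈ f g := ⟨1, one_mem _, rfl⟩
  rw [hgg'] at h1
  refine huniq g g' _ (Or.inl ⟨1, ?_⟩) (hHsub g' _ h1)
  simp
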